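/- The sequence μ_c(L) := −(1/(2n+1))·Σ_{k=1}^{2n+1} cos(2kπ/(2n+1))/|cos(kπ/(2n+1))|, where L = 4n+2, satisfies μ_c(L) ~ (2/π)·ln(L) as n → ∞. -/

import Mathlib

open Real Filter Topology Finset

-- log telescoping bounds
lemma log_add_one_sub_log_le {a : ℝ} (ha : 0 < a) : Real.log (a+1) - Real.log a ≤ 1/a := by
  rw [← Real.log_div (by positivity) (ne_of_gt ha)]
  have h := Real.log_le_sub_one_of_pos (show (0:ℝ) < (a+1)/a by positivity)
  have h2 : (a+1)/a - 1 = 1/a := by field_simp; ring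
  linarith

lemma le_log_add_one_sub_log {a : ℝ} (ha : 0 < a) : 1/(a+1) ≤ Real.log (a+1) - Real.log a := by
  have hb : (0:ℝ) < a + 1 := by linarith
  have h := Real.log_le_sub_one_of_pos (show (0:ℝ) < a/(a+1) by positivity)
  have h2 : Real.log (a/(a+1)) = Real.log a - Real.log (a+1) := Real.log_div (ne_of_gt ha) (ne_of_gt hb)
  have h3 : a/(a+1) - 1 = -(1/(a+1)) := by field_simp; ring
  linarith

lemma harmonic_lower (n : ℕ) : Real.log ((n:ℝ)+1) ≤ ∑ i ∈ range n, (1:ℝ)/((i:ℝ)+1) := by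
  induction n with
  | zero => simp
  | succ m ih =>
    rw [sum_range_succ]
    have h := log_add_one_sub_log_le (show (0:ℝ) < (m:ℝ)+1 by positivity)
    have e : ((m:ℝ)+1)+1 = ((m+1:ℕ):ℝ)+1 := by push_cast; ring
    rw [e] at h
    linarith

lemma harmonic_upper (n : ℕ) : ∑ i ∈ range n, (1:ℝ)/((i:ℝ)+1) ≤ 1 + Real.log n := by
  induction n with
  | zero => simp
  | succ m ih =>
    rw [sum_range_succ]
    rcases Nat.eq_zero_or_pos m with h|h
    · subst h; simp
    · have hm : (0:ℝ) < m := by exact_mod_cast h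
      have h1 := le_log_add_one_sub_log hm
      have e : ((m:ℝ))+1 = ((m+1:ℕ):ℝ) := by push_cast; ring
      push_cast
      linarith

lemma odd_lower (n : ℕ) : (1/2) * Real.log ((n:ℝ)+1) ≤ ∑ i ∈ range n, (1:ℝ)/(2*(i:ℝ)+1) := by
  have h1 : ∑ i ∈ range n, (1:ℝ)/(2*((i:ℝ)+1)) ≤ ∑ i ∈ range n, (1:ℝ)/(2*(i:ℝ)+1) := by
    apply Finset.sum_le_sum
    intro i _
    apply one_div_le_one_div_of_le (by positivity)
    linarith
  have h2 : ∑ i ∈ range n, (1:ℝ)/(2*((i:ℝ)+1)) = (1/2) * ∑ i ∈ range n, (1:ℝ)/((i:ℝ)+1) := by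
    rw [Finset.mul_sum]
    exact Finset.sum_congr rfl (fun i _ => by rw [eq_comm, mul_comm, mul_one_div, div_div]; ring)
  have h3 := harmonic_lower n
  nlinarith

lemma odd_upper (n : ℕ) (hn : 1 ≤ n) :
    ∑ i ∈ range n, (1:ℝ)/(2*(i:ℝ)+1) ≤ 3/2 + (1/2) * Real.log n := by
  obtain ⟨m, rfl⟩ : ∃ m, n = m + 1 := ⟨n-1, by omega⟩
  rw [Finset.sum_range_succ']
  have h1 : ∑ i ∈ range m, (1:ℝ)/(2*((i+1:ℕ):ℝ)+1) ≤ ∑ i ∈ range m, (1:ℝ)/(2*((i:ℝ)+1)) := by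
    apply Finset.sum_le_sum
    intro i _
    apply one_div_le_one_div_of_le (by positivity)
    push_cast; linarith
  have h2 : ∑ i ∈ range m, (1:ℝ)/(2*((i:ℝ)+1)) = (1/2) * ∑ i ∈ range m, (1:ℝ)/((i:ℝ)+1) := by
    rw [Finset.mul_sum]
    exact Finset.sum_congr rfl (fun i _ => by rw [eq_comm, mul_comm, mul_one_div, div_div]; ring)
  have h3 := harmonic_upper m
  have h4 : Real.log (m:ℝ) ≤ Real.log ((m+1:ℕ):ℝ) := by
    rcases Nat.eq_zero_or_pos m with h|h
    · subst h; simp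
    · exact Real.log_le_log (by exact_mod_cast h) (by push_cast; linarith)
  push_cast at *
  nlinarith


lemma inv_sin_le {x : ℝ} (hx : 0 < x) (hx2 : x ≤ π/2) : 1/Real.sin x ≤ 1/x + 1 := by
  have hπ : 0 < π := Real.pi_pos
  have hs : 0 < Real.sin x := Real.sin_pos_of_pos_of_lt_pi hx (by linarith)
  have key : x ≤ (1+x) * Real.sin x := by
    rcases le_or_gt x 1 with h|h
    · have hc := (Real.sin_gt_sub_cube hx).le
      have hd := mul_le_mul_of_nonneg_left hc (show (0:ℝ) ≤ 1+x by linarith)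
      have e1 : x^2*x ≤ x^2*1 := mul_le_mul_of_nonneg_left h (by positivity)
      have e2 : (x^2*x)*x ≤ (x^2*1)*1 := mul_le_mul e1 h (by positivity) (by positivity)
      nlinarith [sq_nonneg x, mul_pos hx hx]
    · have h1 : 2/π * x ≤ Real.sin x := Real.mul_le_sin hx.le hx2
      have h2 : (1+x) * (2/π * x) ≤ (1+x) * Real.sin x :=
        mul_le_mul_of_nonneg_left h1 (by linarith)
      have h3 : x ≤ (1+x) * (2/π * x) := by
        rw [show (1+x) * (2/π * x) = x * ((2+2*x)/π) by ring]
        nth_rewrite 1 [show x = x * 1 by ring]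
        apply mul_le_mul_of_nonneg_left _ hx.le
        rw [le_div_iff₀ hπ]
        nlinarith [Real.pi_le_four]
      linarith
  have e : 1/x + 1 = (1+x)/x := by field_simp
  rw [e, div_le_div_iff₀ hs hx]
  linarith

lemma le_inv_sin {x : ℝ} (hx : 0 < x) (hx2 : x ≤ π/2) : 1/x ≤ 1/Real.sin x := by
  have hπ : 0 < π := Real.pi_pos
  have hs : 0 < Real.sin x := Real.sin_pos_of_pos_of_lt_pi hx (by linarith)
  exact one_div_le_one_div_of_le hs (Real.sin_le hx.le)

lemma cos_ne_zero_thing (n k : ℕ) : Real.cos ((k:ℝ) * π / (2*(n:ℝ)+1)) ≠ 0 := by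
  intro h
  rw [Real.cos_eq_zero_iff] at h
  obtain ⟨m, hm⟩ := h
  have hπ : (π:ℝ) ≠ 0 := Real.pi_ne_zero
  have hN : (2*(n:ℝ)+1) ≠ 0 := by positivity
  field_simp at hm
  have h2' : ((k:ℝ)*2) * π = ((2*(m:ℝ)+1) * (2*(n:ℝ)+1)) * π := by linear_combination π * hm
  have h2 := mul_right_cancel₀ hπ h2'
  have h3 : (k:ℤ) * 2 = (2*m+1) * (2*(n:ℤ)+1) := by exact_mod_cast h2
  have ho : Odd ((2*m+1) * (2*(n:ℤ)+1)) := (odd_two_mul_add_one m).mul (odd_two_mul_add_one (n:ℤ))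
  rw [← h3] at ho
  exact (Int.not_odd_iff_even.mpr ⟨k, by ring⟩) ho


noncomputable def muc (n : ℕ) : ℝ :=
  -(1 / (2 * n + 1)) * ∑ k ∈ Finset.Icc 1 (2 * n + 1),
      Real.cos (2 * k * π / (2 * n + 1)) / |Real.cos (k * π / (2 * n + 1))|

lemma term_eq (n k : ℕ) :
    Real.cos (2 * (k:ℝ) * π / (2*(n:ℝ)+1)) / |Real.cos ((k:ℝ) * π / (2*(n:ℝ)+1))| =
      2 * |Real.cos ((k:ℝ) * π / (2*(n:ℝ)+1))| - 1 / |Real.cos ((k:ℝ) * π / (2*(n:ℝ)+1))| := by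
  have hc := cos_ne_zero_thing n k
  set c := Real.cos ((k:ℝ) * π / (2*(n:ℝ)+1)) with hcdef
  have habs : |c| ≠ 0 := abs_ne_zero.mpr hc
  have h2 : Real.cos (2 * (k:ℝ) * π / (2*(n:ℝ)+1)) = 2 * c^2 - 1 := by
    rw [show 2 * (k:ℝ) * π / (2*(n:ℝ)+1) = 2 * ((k:ℝ) * π / (2*(n:ℝ)+1)) by ring,
      Real.cos_two_mul]
  rw [h2, ← sq_abs c]
  field_simp

lemma muc_eq (n : ℕ) :
    muc n = (1/(2*(n:ℝ)+1)) * (∑ k ∈ Finset.Icc 1 (2*n+1), 1/|Real.cos ((k:ℝ)*π/(2*(n:ℝ)+1))|)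
      - (2/(2*(n:ℝ)+1)) * (∑ k ∈ Finset.Icc 1 (2*n+1), |Real.cos ((k:ℝ)*π/(2*(n:ℝ)+1))|) := by
  unfold muc
  rw [Finset.sum_congr rfl (fun k _ => term_eq n k), Finset.sum_sub_distrib, ← Finset.mul_sum]
  ring

lemma cos_pos_lower (n k : ℕ) (hk2 : k ≤ n) : 0 < Real.cos ((k:ℝ)*π/(2*(n:ℝ)+1)) := by
  apply Real.cos_pos_of_mem_Ioo
  have hπ := Real.pi_pos
  have hk : (k:ℝ) ≤ n := by exact_mod_cast hk2
  constructor
  · have : 0 ≤ (k:ℝ)*π/(2*(n:ℝ)+1) := by positivity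
    linarith
  · rw [div_lt_iff₀ (by positivity)]
    nlinarith

lemma S_eq (n : ℕ) :
    ∑ k ∈ Finset.Icc 1 (2*n+1), 1/|Real.cos ((k:ℝ)*π/(2*(n:ℝ)+1))| =
      2 * (∑ k ∈ Finset.Icc 1 n, 1/Real.cos ((k:ℝ)*π/(2*(n:ℝ)+1))) + 1 := by
  have h0 : ∀ m : ℕ, (Finset.Icc 1 m) = Finset.Ioc 0 m := fun m => Finset.Icc_add_one_left_eq_Ioc 0 m
  rw [h0, h0, ← Finset.sum_Ioc_consecutive _ (Nat.zero_le n) (by omega : n ≤ 2*n+1),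
    Finset.sum_Ioc_succ_top (by omega : n ≤ 2*n)]
  have habs : ∀ k ∈ Finset.Ioc 0 n, (1:ℝ)/|Real.cos ((k:ℝ)*π/(2*(n:ℝ)+1))|
      = 1/Real.cos ((k:ℝ)*π/(2*(n:ℝ)+1)) := by
    intro k hk
    rw [Finset.mem_Ioc] at hk
    rw [abs_of_pos (cos_pos_lower n k hk.2)]
  have hlast : (1:ℝ)/|Real.cos (((2*n+1:ℕ):ℝ)*π/(2*(n:ℝ)+1))| = 1 := by
    rw [show ((2*n+1:ℕ):ℝ)*π/(2*(n:ℝ)+1) = π by push_cast; field_simp]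
    simp [Real.cos_pi]
  have hmid : ∑ k ∈ Finset.Ioc n (2*n), (1:ℝ)/|Real.cos ((k:ℝ)*π/(2*(n:ℝ)+1))|
      = ∑ k ∈ Finset.Ioc 0 n, (1:ℝ)/|Real.cos ((k:ℝ)*π/(2*(n:ℝ)+1))| := by
    apply Finset.sum_nbij' (i := fun k => 2*n+1-k) (j := fun k => 2*n+1-k)
    · intro a ha; rw [Finset.mem_Ioc] at *; omega
    · intro a ha; rw [Finset.mem_Ioc] at *; omega
    · intro a ha; rw [Finset.mem_Ioc] at ha; omega
    · intro a ha; rw [Finset.mem_Ioc] at ha; omega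
    · intro a ha
      rw [Finset.mem_Ioc] at ha
      congr 1
      have hc : ((2*n+1-a:ℕ):ℝ) = 2*(n:ℝ)+1-(a:ℝ) := by
        have : (a:ℝ) ≤ 2*(n:ℝ)+1 := by exact_mod_cast (by omega : a ≤ 2*n+1)
        push_cast [Nat.cast_sub (by omega : a ≤ 2*n+1)]
        ring
      rw [hc, show (2*(n:ℝ)+1-(a:ℝ))*π/(2*(n:ℝ)+1) = π - (a:ℝ)*π/(2*(n:ℝ)+1) by
        field_simp]
      rw [Real.cos_pi_sub, abs_neg]
  rw [Finset.sum_congr rfl habs, hlast, hmid, Finset.sum_congr rfl habs]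
  ring

lemma sec_sum_eq (n : ℕ) :
    ∑ k ∈ Finset.Icc 1 n, 1/Real.cos ((k:ℝ)*π/(2*(n:ℝ)+1)) =
      ∑ i ∈ Finset.range n, 1/Real.sin ((2*(i:ℝ)+1)*π/(2*(2*(n:ℝ)+1))) := by
  apply Finset.sum_nbij' (i := fun k => n - k) (j := fun i => n - i)
  · intro a ha; rw [Finset.mem_Icc] at ha; rw [Finset.mem_range]; omega
  · intro a ha; rw [Finset.mem_range] at ha; rw [Finset.mem_Icc]; omega
  · intro a ha; rw [Finset.mem_Icc] at ha; omega
  · intro a ha; rw [Finset.mem_range] at ha; omega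
  · intro a ha
    rw [Finset.mem_Icc] at ha
    congr 1
    have hc : ((n-a:ℕ):ℝ) = (n:ℝ)-(a:ℝ) := by
      push_cast [Nat.cast_sub ha.2]; ring
    rw [hc, show (2*((n:ℝ)-(a:ℝ))+1)*π/(2*(2*(n:ℝ)+1)) = π/2 - (a:ℝ)*π/(2*(n:ℝ)+1) by
      field_simp; ring]
    rw [Real.sin_pi_div_two_sub]

lemma y_mem (n i : ℕ) (hi : i < n) : 0 < (2*(i:ℝ)+1)*π/(2*(2*(n:ℝ)+1)) ∧
    (2*(i:ℝ)+1)*π/(2*(2*(n:ℝ)+1)) ≤ π/2 := by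
  have hπ := Real.pi_pos
  have hin : (i:ℝ)+1 ≤ n := by exact_mod_cast hi
  constructor
  · positivity
  · rw [div_le_div_iff₀ (by positivity) (by norm_num)]
    nlinarith

lemma sin_sum_lower (n : ℕ) :
    (2*(2*(n:ℝ)+1)/π) * ∑ i ∈ range n, (1:ℝ)/(2*(i:ℝ)+1) ≤
      ∑ i ∈ range n, 1/Real.sin ((2*(i:ℝ)+1)*π/(2*(2*(n:ℝ)+1))) := by
  rw [Finset.mul_sum]
  apply Finset.sum_le_sum
  intro i hi
  obtain ⟨hy1, hy2⟩ := y_mem n i (Finset.mem_range.mp hi)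
  have h := le_inv_sin hy1 hy2
  have e : 2*(2*(n:ℝ)+1)/π * (1/(2*(i:ℝ)+1)) = 1/((2*(i:ℝ)+1)*π/(2*(2*(n:ℝ)+1))) := by
    have hπ0 := Real.pi_pos
    have hi0 : (0:ℝ) < 2*(i:ℝ)+1 := by positivity
    field_simp
  rw [e]; exact h

lemma sin_sum_upper (n : ℕ) :
    ∑ i ∈ range n, 1/Real.sin ((2*(i:ℝ)+1)*π/(2*(2*(n:ℝ)+1))) ≤
      (2*(2*(n:ℝ)+1)/π) * (∑ i ∈ range n, (1:ℝ)/(2*(i:ℝ)+1)) + n := by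
  have h : ∑ i ∈ range n, 1/Real.sin ((2*(i:ℝ)+1)*π/(2*(2*(n:ℝ)+1))) ≤
      ∑ i ∈ range n, (2*(2*(n:ℝ)+1)/π * (1/(2*(i:ℝ)+1)) + 1) := by
    apply Finset.sum_le_sum
    intro i hi
    obtain ⟨hy1, hy2⟩ := y_mem n i (Finset.mem_range.mp hi)
    have h := inv_sin_le hy1 hy2
    have e : 2*(2*(n:ℝ)+1)/π * (1/(2*(i:ℝ)+1)) = 1/((2*(i:ℝ)+1)*π/(2*(2*(n:ℝ)+1))) := by
      have hπ0 := Real.pi_pos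
      have hi0 : (0:ℝ) < 2*(i:ℝ)+1 := by positivity
      field_simp
    rw [e]; exact h
  rw [Finset.sum_add_distrib, Finset.sum_const, card_range, ← Finset.mul_sum] at h
  simpa using h

lemma muc_lower (n : ℕ) : (2/π)*Real.log ((n:ℝ)+1) - 2 ≤ muc n := by
  rw [muc_eq]
  have hπ := Real.pi_pos
  have hN : (0:ℝ) < 2*(n:ℝ)+1 := by positivity
  set S := ∑ k ∈ Finset.Icc 1 (2*n+1), 1/|Real.cos ((k:ℝ)*π/(2*(n:ℝ)+1))| with hSdef
  set B := ∑ k ∈ Finset.Icc 1 (2*n+1), |Real.cos ((k:ℝ)*π/(2*(n:ℝ)+1))| with hBdef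
  set On := ∑ i ∈ range n, (1:ℝ)/(2*(i:ℝ)+1) with hOdef
  have hB : B ≤ 2*(n:ℝ)+1 := by
    have := Finset.sum_le_card_nsmul (Finset.Icc 1 (2*n+1))
      (fun k => |Real.cos ((k:ℝ)*π/(2*(n:ℝ)+1))|) 1 (fun k _ => Real.abs_cos_le_one _)
    simp [Nat.card_Icc] at this
    rw [hBdef]
    convert this using 2
  have hS : 2*((2*(2*(n:ℝ)+1)/π) * On) + 1 ≤ S := by
    rw [hSdef, S_eq, sec_sum_eq]
    have := sin_sum_lower n
    rw [← hOdef] at this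
    linarith
  have hO := odd_lower n
  rw [← hOdef] at hO
  have h1 : (1/(2*(n:ℝ)+1)) * (2*((2*(2*(n:ℝ)+1)/π) * On) + 1) ≤ (1/(2*(n:ℝ)+1)) * S :=
    mul_le_mul_of_nonneg_left hS (by positivity)
  have h2 : (1/(2*(n:ℝ)+1)) * (2*((2*(2*(n:ℝ)+1)/π) * On) + 1) = (4/π)*On + 1/(2*(n:ℝ)+1) := by
    field_simp
    ring
  have h3 : (2/(2*(n:ℝ)+1)) * B ≤ 2 := by
    have := mul_le_mul_of_nonneg_left hB (show (0:ℝ) ≤ 2/(2*(n:ℝ)+1) by positivity)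
    calc (2/(2*(n:ℝ)+1)) * B ≤ (2/(2*(n:ℝ)+1)) * (2*(n:ℝ)+1) := this
    _ = 2 := by field_simp
  have h4 : (2/π)*Real.log ((n:ℝ)+1) ≤ (4/π)*On := by
    have := mul_le_mul_of_nonneg_left hO (show (0:ℝ) ≤ 4/π by positivity)
    calc (2/π)*Real.log ((n:ℝ)+1) = (4/π)*((1/2)*Real.log ((n:ℝ)+1)) := by ring
    _ ≤ (4/π)*On := this
  have h5 : (0:ℝ) < 1/(2*(n:ℝ)+1) := by positivity
  linarith

lemma muc_upper (n : ℕ) (hn : 1 ≤ n) : muc n ≤ (2/π)*Real.log n + 3 := by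
  rw [muc_eq]
  have hπ := Real.pi_gt_three
  have hπ0 := Real.pi_pos
  have hN : (0:ℝ) < 2*(n:ℝ)+1 := by positivity
  set S := ∑ k ∈ Finset.Icc 1 (2*n+1), 1/|Real.cos ((k:ℝ)*π/(2*(n:ℝ)+1))| with hSdef
  set B := ∑ k ∈ Finset.Icc 1 (2*n+1), |Real.cos ((k:ℝ)*π/(2*(n:ℝ)+1))| with hBdef
  set On := ∑ i ∈ range n, (1:ℝ)/(2*(i:ℝ)+1) with hOdef
  have hB : 0 ≤ B := Finset.sum_nonneg (fun k _ => abs_nonneg _)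
  have hS : S ≤ 2*((2*(2*(n:ℝ)+1)/π) * On + n) + 1 := by
    rw [hSdef, S_eq, sec_sum_eq]
    have := sin_sum_upper n
    rw [← hOdef] at this
    linarith
  have hO := odd_upper n hn
  rw [← hOdef] at hO
  have h1 : (1/(2*(n:ℝ)+1)) * S ≤ (1/(2*(n:ℝ)+1)) * (2*((2*(2*(n:ℝ)+1)/π) * On + n) + 1) :=
    mul_le_mul_of_nonneg_left hS (by positivity)
  have h2 : (1/(2*(n:ℝ)+1)) * (2*((2*(2*(n:ℝ)+1)/π) * On + n) + 1) = (4/π)*On + 1 := by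
    field_simp
    ring
  have h3 : 0 ≤ (2/(2*(n:ℝ)+1)) * B := by positivity
  have h4 : (4/π)*On ≤ (4/π)*(3/2 + (1/2)*Real.log n) :=
    mul_le_mul_of_nonneg_left hO (by positivity)
  have h5 : (4/π)*(3/2 + (1/2)*Real.log n) = 6/π + (2/π)*Real.log n := by ring
  have h6 : 6/π ≤ 2 := by
    rw [div_le_iff₀ hπ0]; linarith
  linarith

lemma muc_close (n : ℕ) (hn : 1 ≤ n) : |muc n - (2/π)*Real.log (4*(n:ℝ)+2)| ≤ 6 := by
  have hπ := Real.pi_gt_three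
  have hπ0 := Real.pi_pos
  have h1 := muc_lower n
  have h2 := muc_upper n hn
  have hn1 : (1:ℝ) ≤ n := by exact_mod_cast hn
  have hc0 : (0:ℝ) ≤ 2/π := by positivity
  have hc1 : (2:ℝ)/π ≤ 2/3 := by
    rw [div_le_div_iff₀ hπ0 (by norm_num)]; linarith
  have hlog1 : Real.log (n:ℝ) ≤ Real.log (4*(n:ℝ)+2) := Real.log_le_log (by linarith) (by linarith)
  have hlog2 : Real.log (4*(n:ℝ)+2) ≤ Real.log ((n:ℝ)+1) + 5 := by
    have ha : Real.log (4*(n:ℝ)+2) ≤ Real.log (6*((n:ℝ)+1)) :=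
      Real.log_le_log (by linarith) (by linarith)
    have hb : Real.log (6*((n:ℝ)+1)) = Real.log 6 + Real.log ((n:ℝ)+1) :=
      Real.log_mul (by norm_num) (by positivity)
    have hc : Real.log 6 ≤ 5 := by
      have := Real.log_le_sub_one_of_pos (show (0:ℝ) < 6 by norm_num)
      linarith
    linarith
  have e1 := mul_le_mul_of_nonneg_left hlog1 hc0
  have e2 := mul_le_mul_of_nonneg_left hlog2 hc0
  rw [abs_le]
  constructor
  · nlinarith
  · nlinarith

theorem muc_asymptotic :
    Tendsto (fun n : ℕ => muc n / ((2 / π) * Real.log (4 * n + 2)))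
      atTop (𝓝 1) := by
  have hπ := Real.pi_pos
  have hD : Tendsto (fun n : ℕ => (2/π) * Real.log (4*(n:ℝ)+2)) atTop atTop := by
    apply Tendsto.const_mul_atTop (by positivity)
    apply Real.tendsto_log_atTop.comp
    apply tendsto_atTop_add_const_right
    exact (tendsto_natCast_atTop_atTop).const_mul_atTop (by norm_num)
  have h6 : Tendsto (fun n : ℕ => (6:ℝ)/((2/π) * Real.log (4*(n:ℝ)+2))) atTop (𝓝 0) :=
    tendsto_const_nhds.div_atTop hD
  have hDpos : ∀ᶠ n : ℕ in atTop, 0 < (2/π) * Real.log (4*(n:ℝ)+2) := hD.eventually_gt_atTop 0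
  have hbd : ∀ᶠ n : ℕ in atTop, |muc n - (2/π)*Real.log (4*(n:ℝ)+2)| ≤ 6 := by
    filter_upwards [eventually_ge_atTop 1] with n hn using muc_close n hn
  apply tendsto_of_tendsto_of_tendsto_of_le_of_le'
    (g := fun n:ℕ => 1 - 6/((2/π)*Real.log (4*(n:ℝ)+2)))
    (h := fun n:ℕ => 1 + 6/((2/π)*Real.log (4*(n:ℝ)+2)))
  · simpa using tendsto_const_nhds.sub h6
  · simpa using tendsto_const_nhds.add h6
  · filter_upwards [hDpos, hbd] with n h1 h2
    rw [abs_le] at h2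
    have key : (((2/π)*Real.log (4*(n:ℝ)+2)) - 6)/((2/π)*Real.log (4*(n:ℝ)+2)) ≤
        muc n / ((2/π)*Real.log (4*(n:ℝ)+2)) := by
      gcongr
      linarith [h2.1]
    rwa [sub_div, div_self (ne_of_gt h1)] at key
  · filter_upwards [hDpos, hbd] with n h1 h2
    rw [abs_le] at h2
    have key : muc n / ((2/π)*Real.log (4*(n:ℝ)+2)) ≤
        (((2/π)*Real.log (4*(n:ℝ)+2)) + 6)/((2/π)*Real.log (4*(n:ℝ)+2)) := by
      gcongr
      linarith [h2.2]
    rwa [add_div, div_self (ne_of_gt h1)] at key
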